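/- In the two-state Markov chain example (identity P, flip-ε matrix P̃, initial masses p and p - δ at state 1), suppose -p f_n(ε)/(1 - f_n(ε)) ≤ δ ≤ (1-p) f_n(ε)/(1 - f_n(ε)) where f_n(ε) = 1 - (1-ε)ⁿ. Then ‖ℙⁿ - ℙ̃ⁿ‖ = 2 f_n(ε), which does not depend on δ. -/

import Mathlib

open MeasureTheory ProbabilityTheory
open scoped ENNReal

/-- Total mass (as a real number) of a measure. -/
noncomputable def mass {X : Type*} [MeasurableSpace X] (μ : Measure X) : ℝ :=
  (μ Set.univ).toReal

/-- Total variation distance `‖ν - ν'‖` between two finite measures. -/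
noncomputable def tvDist {X : Type*} [MeasurableSpace X] (ν ν' : Measure X)
    [IsFiniteMeasure ν] [IsFiniteMeasure ν'] : ℝ :=
  (((ν.toSignedMeasure - ν'.toSignedMeasure).totalVariation) Set.univ).toReal

/-- The minimum `ν ∧ ν' := ν - (ν - ν')⁻` of two finite measures, via the
Hahn–Jordan decomposition of `ν - ν'`. -/
noncomputable def measInf {X : Type*} [MeasurableSpace X] (ν ν' : Measure X)
    [IsFiniteMeasure ν] [IsFiniteMeasure ν'] : Measure X :=
  ν - (ν.toSignedMeasure - ν'.toSignedMeasure).toJordanDecomposition.negPart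

/-- `chainLaw μ P Pr` says that `Pr n` is the law on `{0,1}^{n+1}` of the first
`n+1` states of the chain with initial distribution `μ` and one-step
history-dependent kernels `P`. -/
def chainLaw (μ : Measure (Fin 2)) (P : ∀ k : ℕ, Kernel (Fin (k + 1) → Fin 2) (Fin 2))
    (Pr : ∀ n : ℕ, Measure (Fin (n + 1) → Fin 2)) : Prop :=
  Pr 0 = μ.map (fun x => fun _ : Fin 1 => x) ∧
    ∀ n, Pr (n + 1) = ((Pr n) ⊗ₘ (P n)).map (fun q => Fin.snoc q.1 q.2)

/-- `isIdentityKernel P` : the chain moves deterministically, staying in its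
current state (identity transition matrix). -/
def isIdentityKernel (P : ∀ k : ℕ, Kernel (Fin (k + 1) → Fin 2) (Fin 2)) : Prop :=
  ∀ k ω, P k ω = Measure.dirac (ω (Fin.last k))

/-- `isFlipKernel ε P` : at each step the chain stays with probability `1 - ε`
and flips with probability `ε`. -/
def isFlipKernel (ε : ℝ) (P : ∀ k : ℕ, Kernel (Fin (k + 1) → Fin 2) (Fin 2)) : Prop :=
  ∀ k ω, P k ω = ENNReal.ofReal (1 - ε) • Measure.dirac (ω (Fin.last k)) +
    ENNReal.ofReal ε • Measure.dirac (ω (Fin.last k) + 1)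

/-!
Under the identity kernel a path never moves, so `ℙⁿ` is carried by the two constant paths,
with masses `1 - p` and `p`. Under the flip kernel the constant path at `c` has mass
`μ̃{c} (1 - ε)ⁿ`, and the two bounds on `δ` say exactly that this is at most `μ{c}`.
Hence `∑ₓ min (ℙⁿ{x}, ℙ̃ⁿ{x}) = (1 - ε)ⁿ`, and for probability measures on a finite space
`‖ν - ν'‖ = 2 (1 - ∑ₓ min (ν{x}, ν'{x}))`.
-/

lemma MeasureTheory.SignedMeasure.totalVariation_real_singleton {X : Type*} [MeasurableSpace X]
    [MeasurableSingletonClass X] (s : SignedMeasure X) (x : X) :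
    s.totalVariation.real {x} = |s {x}| := by
  set j := s.toJordanDecomposition
  obtain ⟨u, -, hpos, hneg⟩ := j.mutuallySingular
  rw [s.apply_eq_posPart_real_sub_negPart_real (measurableSet_singleton x),
    SignedMeasure.totalVariation, measureReal_add_apply]
  by_cases hx : x ∈ u
  · have h0 : j.posPart.real {x} = 0 := by
      rw [measureReal_def, measure_mono_null (Set.singleton_subset_iff.2 hx) hpos,
        ENNReal.toReal_zero]
    rw [h0, zero_sub, abs_neg, abs_of_nonneg measureReal_nonneg, zero_add]
  · have h0 : j.negPart.real {x} = 0 := by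
      rw [measureReal_def, measure_mono_null (Set.singleton_subset_iff.2 hx) hneg,
        ENNReal.toReal_zero]
    rw [h0, sub_zero, abs_of_nonneg measureReal_nonneg, add_zero]

section Finite

variable {X : Type*} [Fintype X] [MeasurableSpace X] [MeasurableSingletonClass X]

lemma sum_measureReal_singleton_eq_one (m : Measure X) [IsProbabilityMeasure m] :
    ∑ x, m.real {x} = 1 := by
  rw [sum_measureReal_singleton, Finset.coe_univ, probReal_univ]

lemma tvDist_eq_sum_abs (ν ν' : Measure X) [IsFiniteMeasure ν] [IsFiniteMeasure ν'] :
    tvDist ν ν' = ∑ x, |ν.real {x} - ν'.real {x}| := by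
  rw [tvDist, ← measureReal_def, ← Finset.coe_univ, ← sum_measureReal_singleton]
  refine Finset.sum_congr rfl fun x _ => ?_
  rw [SignedMeasure.totalVariation_real_singleton, sub_apply,
    ν.toSignedMeasure_apply_measurable (measurableSet_singleton x),
    ν'.toSignedMeasure_apply_measurable (measurableSet_singleton x)]

lemma tvDist_eq_two_mul_one_sub_sum_min (ν ν' : Measure X) [IsProbabilityMeasure ν]
    [IsProbabilityMeasure ν'] :
    tvDist ν ν' = 2 * (1 - ∑ x, min (ν.real {x}) (ν'.real {x})) := by
  have habs (a b : ℝ) : |a - b| = a + b - 2 * min a b := by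
    rw [← max_sub_min_eq_abs', ← min_add_max a b]
    ring
  simp only [tvDist_eq_sum_abs, habs, Finset.sum_sub_distrib, Finset.sum_add_distrib,
    ← Finset.mul_sum, sum_measureReal_singleton_eq_one]
  ring

end Finite

lemma Fin.preimage_snoc_singleton {α : Type*} {n : ℕ} (x : Fin (n + 1) → α) :
    (fun q : (Fin n → α) × α => (Fin.snoc q.1 q.2 : Fin (n + 1) → α)) ⁻¹' {x} =
      {(Fin.init x, x (Fin.last n))} := by
  ext ⟨a, c⟩
  simp only [Set.mem_preimage, Set.mem_singleton_iff, Prod.mk.injEq]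
  conv_lhs => rw [← Fin.snoc_init_self x]
  exact Fin.snoc_inj

@[simp] lemma Fin.init_const {α : Type*} {n : ℕ} (c : α) :
    Fin.init (fun _ : Fin (n + 1) => c) = fun _ => c :=
  rfl

lemma MeasureTheory.Measure.compProd_apply_singleton {α β : Type*} [MeasurableSpace α]
    [MeasurableSpace β] [MeasurableSingletonClass α] [MeasurableSingletonClass β]
    (μ : Measure α) [SFinite μ] (κ : Kernel α β) [IsSFiniteKernel κ] (a : α) (b : β) :
    (μ ⊗ₘ κ) {(a, b)} = μ {a} * κ a {b} := by
  rw [← Set.singleton_prod_singleton,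
    Measure.compProd_apply_prod (measurableSet_singleton a) (measurableSet_singleton b),
    lintegral_singleton, mul_comm]

namespace chainLaw

variable {μ : Measure (Fin 2)} {P : ∀ k : ℕ, Kernel (Fin (k + 1) → Fin 2) (Fin 2)}
  {Pr : ∀ n : ℕ, Measure (Fin (n + 1) → Fin 2)}

lemma apply_singleton_zero (h : chainLaw μ P Pr) (x : Fin 1 → Fin 2) : Pr 0 {x} = μ {x 0} := by
  rw [h.1, Measure.map_apply (measurable_of_countable _) (measurableSet_singleton x)]
  congr 1
  ext c
  simp [funext_iff, Fin.forall_fin_one, eq_comm]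

variable [∀ n, SFinite (Pr n)] [∀ k, IsSFiniteKernel (P k)]

lemma apply_singleton_succ (h : chainLaw μ P Pr) (n : ℕ) (x : Fin (n + 2) → Fin 2) :
    Pr (n + 1) {x} = Pr n {Fin.init x} * P n (Fin.init x) {x (Fin.last (n + 1))} := by
  rw [h.2 n, Measure.map_apply (measurable_of_countable _) (measurableSet_singleton x),
    Fin.preimage_snoc_singleton, Measure.compProd_apply_singleton]

lemma apply_const_of_isIdentityKernel (h : chainLaw μ P Pr) (hP : isIdentityKernel P) (n : ℕ)
    (c : Fin 2) : Pr n {fun _ => c} = μ {c} := by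
  induction n with
  | zero => exact h.apply_singleton_zero _
  | succ n ih =>
    rw [h.apply_singleton_succ, hP, Fin.init_const, ih,
      Measure.dirac_apply_of_mem (Set.mem_singleton c), mul_one]

lemma apply_eq_zero_of_isIdentityKernel (h : chainLaw μ P Pr) (hP : isIdentityKernel P) (n : ℕ)
    (x : Fin (n + 1) → Fin 2) (hx : ∀ c, x ≠ fun _ => c) : Pr n {x} = 0 := by
  induction n with
  | zero =>
    exact absurd (funext fun i => congrArg x (Subsingleton.elim (α := Fin 1) i 0)) (hx (x 0))
  | succ n ih =>
    rw [h.apply_singleton_succ]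
    by_cases hinit : ∃ c, Fin.init x = fun _ => c
    · obtain ⟨c, hc⟩ := hinit
      have hlast : x (Fin.last (n + 1)) ≠ c :=
        fun hxc => hx c (funext fun i => Fin.lastCases hxc (fun j => congrFun hc j) i)
      rw [hP, hc, Measure.dirac_apply,
        Set.indicator_of_notMem (Set.notMem_singleton_iff.2 hlast.symm), mul_zero]
    · push Not at hinit
      rw [ih _ hinit, zero_mul]

lemma apply_const_of_isFlipKernel {ε : ℝ} (h : chainLaw μ P Pr) (hP : isFlipKernel ε P)
    (n : ℕ) (c : Fin 2) : Pr n {fun _ => c} = μ {c} * ENNReal.ofReal (1 - ε) ^ n := by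
  induction n with
  | zero => rw [h.apply_singleton_zero, pow_zero, mul_one]
  | succ n ih =>
    have hflip : c + 1 ≠ c := by fin_cases c <;> decide
    rw [h.apply_singleton_succ, hP]
    simp [hflip, ih, pow_succ, mul_assoc]

lemma measureReal_const_of_isFlipKernel {ε : ℝ} (h : chainLaw μ P Pr) (hP : isFlipKernel ε P)
    (hε : ε ≤ 1) (n : ℕ) (c : Fin 2) :
    (Pr n).real {fun _ => c} = μ.real {c} * (1 - ε) ^ n := by
  rw [measureReal_def, h.apply_const_of_isFlipKernel hP, ← ENNReal.ofReal_pow (sub_nonneg.2 hε),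
    ENNReal.toReal_mul, ENNReal.toReal_ofReal (pow_nonneg (sub_nonneg.2 hε) n), measureReal_def]

lemma sum_min_measureReal_of_isIdentityKernel (h : chainLaw μ P Pr) (hP : isIdentityKernel P)
    (n : ℕ) (ν : Measure (Fin (n + 1) → Fin 2)) (hν : ∀ c, ν.real {fun _ => c} ≤ μ.real {c}) :
    ∑ x, min ((Pr n).real {x}) (ν.real {x}) = ∑ c, ν.real {fun _ => c} := by
  refine (Fintype.sum_of_injective (fun c _ => c) Function.const_injective _ _ ?_ ?_).symm
  · rintro x hx
    rw [measureReal_def, h.apply_eq_zero_of_isIdentityKernel hP n x fun c hc => hx ⟨c, hc.symm⟩,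
      ENNReal.toReal_zero, min_eq_left measureReal_nonneg]
  · intro c
    rw [measureReal_def (Pr n), h.apply_const_of_isIdentityKernel hP, ← measureReal_def,
      min_eq_right (hν c)]

end chainLaw

lemma measureReal_zero_add_measureReal_one (m : Measure (Fin 2)) [IsProbabilityMeasure m] :
    m.real {0} + m.real {1} = 1 := by
  rw [← Fin.sum_univ_two (fun c => m.real {c}), sum_measureReal_singleton_eq_one]

theorem stmt16_general (p δ ε : ℝ) (hp0 : 0 ≤ p)
    (hδ : δ ∈ Set.Ioo (p - 1) p) (hε : ε ∈ Set.Ioo (0 : ℝ) 1)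
    (μ μ' : Measure (Fin 2)) [IsProbabilityMeasure μ] [IsProbabilityMeasure μ']
    (hμ : μ {1} = ENNReal.ofReal p) (hμ' : μ' {1} = ENNReal.ofReal (p - δ))
    (P P' : ∀ k : ℕ, Kernel (Fin (k + 1) → Fin 2) (Fin 2))
    [∀ k, IsMarkovKernel (P k)] [∀ k, IsMarkovKernel (P' k)]
    (hP : isIdentityKernel P) (hP' : isFlipKernel ε P')
    (Pr Pr' : ∀ n : ℕ, Measure (Fin (n + 1) → Fin 2))
    [∀ n, IsProbabilityMeasure (Pr n)] [∀ n, IsProbabilityMeasure (Pr' n)]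
    (hPr : chainLaw μ P Pr) (hPr' : chainLaw μ' P' Pr')
    (n : ℕ)
    (hlow : -(p * (1 - (1 - ε) ^ n)) / (1 - (1 - (1 - ε) ^ n)) ≤ δ)
    (hhigh : δ ≤ (1 - p) * (1 - (1 - ε) ^ n) / (1 - (1 - (1 - ε) ^ n))) :
    tvDist (Pr n) (Pr' n) = 2 * (1 - (1 - ε) ^ n) := by
  set q := (1 - ε) ^ n
  have hq : 0 < q := pow_pos (sub_pos.2 hε.2) n
  rw [sub_sub_cancel, div_le_iff₀ hq] at hlow
  rw [sub_sub_cancel, le_div_iff₀ hq] at hhigh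
  have hμ1 : μ.real {1} = p := by rw [measureReal_def, hμ, ENNReal.toReal_ofReal hp0]
  have hμ'1 : μ'.real {1} = p - δ := by
    rw [measureReal_def, hμ', ENNReal.toReal_ofReal (sub_nonneg.2 hδ.2.le)]
  have hμ0 : μ.real {0} = 1 - p := by linarith [measureReal_zero_add_measureReal_one μ]
  have hμ'0 : μ'.real {0} = 1 - (p - δ) := by
    linarith [measureReal_zero_add_measureReal_one μ']
  have hPr'_const (c : Fin 2) : (Pr' n).real {fun _ => c} = μ'.real {c} * q :=
    hPr'.measureReal_const_of_isFlipKernel hP' hε.2.le n c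
  have hle (c : Fin 2) : μ'.real {c} * q ≤ μ.real {c} := by
    fin_cases c
    · rw [Fin.zero_eta, hμ0, hμ'0]
      linarith
    · rw [Fin.mk_one, hμ1, hμ'1]
      linarith
  rw [tvDist_eq_two_mul_one_sub_sum_min, hPr.sum_min_measureReal_of_isIdentityKernel hP n _
    fun c => (hPr'_const c).trans_le (hle c)]
  simp_rw [hPr'_const, ← Finset.sum_mul, sum_measureReal_singleton_eq_one, one_mul]

/-- Two-state chain, case [b.]: if
`-p f_n(ε)/(1 - f_n(ε)) ≤ δ ≤ (1-p) f_n(ε)/(1 - f_n(ε))` with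
`f_n(ε) = 1 − (1 − ε)ⁿ`, then `‖ℙⁿ − ℙ̃ⁿ‖ = 2 f_n(ε)`, independently of `δ`. -/
theorem stmt16 (p δ ε : ℝ) (hp0 : 0 ≤ p) (hp1 : p ≤ 1)
    (hδ : δ ∈ Set.Ioo (p - 1) p) (hε : ε ∈ Set.Ioo (0 : ℝ) 1)
    (μ μ' : Measure (Fin 2)) [IsProbabilityMeasure μ] [IsProbabilityMeasure μ']
    (hμ : μ {1} = ENNReal.ofReal p) (hμ' : μ' {1} = ENNReal.ofReal (p - δ))
    (P P' : ∀ k : ℕ, Kernel (Fin (k + 1) → Fin 2) (Fin 2))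
    [∀ k, IsMarkovKernel (P k)] [∀ k, IsMarkovKernel (P' k)]
    (hP : isIdentityKernel P) (hP' : isFlipKernel ε P')
    (Pr Pr' : ∀ n : ℕ, Measure (Fin (n + 1) → Fin 2))
    [∀ n, IsProbabilityMeasure (Pr n)] [∀ n, IsProbabilityMeasure (Pr' n)]
    (hPr : chainLaw μ P Pr) (hPr' : chainLaw μ' P' Pr')
    (n : ℕ)
    (hlow : -(p * (1 - (1 - ε) ^ n)) / (1 - (1 - (1 - ε) ^ n)) ≤ δ)
    (hhigh : δ ≤ (1 - p) * (1 - (1 - ε) ^ n) / (1 - (1 - (1 - ε) ^ n))) :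
    tvDist (Pr n) (Pr' n) = 2 * (1 - (1 - ε) ^ n) :=
  stmt16_general p δ ε hp0 hδ hε μ μ' hμ hμ' P P' hP hP' Pr Pr' hPr hPr' n hlow hhigh
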